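/- Let 𝒟 be a category with pullbacks and let ℰ be the category with the same objects whose morphisms D' → D are equivalence classes [φ, φ'] of spans from D' to D, with composition by pullback. Then ℰ is a groupoid: every morphism [φ, φ'] has inverse [φ', φ]. -/

import Mathlib

open CategoryTheory CategoryTheory.Limits

universe u v

variable {C : Type u} [Category.{v} C]

/-- A span from `A` to `B`: a diagram `A ← X → B`. -/
structure Span (A B : C) : Type max u v where
  apex : C
  left : apex ⟶ A
  right : apex ⟶ B

/-- One generating step of the equivalence of spans: precompose both legs with a
common map into the apex. -/
def SpanStep {A B : C} (S T : Span A B) : Prop :=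
  ∃ ρ : T.apex ⟶ S.apex, ρ ≫ S.left = T.left ∧ ρ ≫ S.right = T.right

/-- The equivalence relation on spans generated by `SpanStep`. -/
def SpanEquiv {A B : C} : Span A B → Span A B → Prop :=
  Relation.EqvGen SpanStep

/-- Composition of spans by pullback of the middle cospan. -/
noncomputable def Span.comp [HasPullbacks C] {A B D : C} (S : Span A B) (T : Span B D) :
    Span A D :=
  ⟨pullback S.right T.left, pullback.fst S.right T.left ≫ S.left,
    pullback.snd S.right T.left ≫ T.right⟩

/-- The identity span on `A`. -/
def Span.id (A : C) : Span A A := ⟨A, 𝟙 A, 𝟙 A⟩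

/-- The reverse of a span. -/
def Span.rev {A B : C} (S : Span A B) : Span B A := ⟨S.apex, S.right, S.left⟩

/-! Both `S ∘ S.rev` and the identity span on `A` receive a map of spans from the span
`A ← X → A` with both legs `S.left`: the diagonal `X ⟶ X ×_B X` and `S.left` itself. -/

namespace Span

def diag {X A : C} (f : X ⟶ A) : Span A A := ⟨X, f, f⟩

theorem spanStep_id_diag {X A : C} (f : X ⟶ A) : SpanStep (Span.id A) (diag f) :=
  ⟨f, Category.comp_id f, Category.comp_id f⟩

theorem spanStep_comp_rev_diag [HasPullbacks C] {A B : C} (S : Span A B) :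
    SpanStep (S.comp S.rev) (diag S.left) :=
  ⟨pullback.diagonal S.right, pullback.diagonal_fst_assoc S.right S.left,
    pullback.diagonal_snd_assoc S.right S.left⟩

theorem comp_rev_equiv_id [HasPullbacks C] {A B : C} (S : Span A B) :
    SpanEquiv (S.comp S.rev) (Span.id A) :=
  .trans _ _ _ (.rel _ _ S.spanStep_comp_rev_diag)
    (.symm _ _ (.rel _ _ (spanStep_id_diag S.left)))

end Span

/-- In the category of equivalence classes of spans in a category with pullbacks,
every morphism `[φ, φ']` is invertible with inverse the reversed span `[φ', φ]`:
composing a span with its reverse is equivalent to the identity span. -/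
theorem span_category_is_groupoid [HasPullbacks C] {A B : C} (S : Span A B) :
    SpanEquiv (S.comp S.rev) (Span.id A) ∧ SpanEquiv (S.rev.comp S) (Span.id B) :=
  ⟨S.comp_rev_equiv_id, S.rev.comp_rev_equiv_id⟩
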